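/- For each k ≥ 1, the function w_k(f) = f_k/(1 - Σ_{j=0}^{k-1} f_j) satisfies ∇w_k · r_i = 0 for every i ≠ k, where r_i is the i-th eigenvector of the discrete velocity traffic system; likewise w_0 = f_0 satisfies ∇w_0 · r_i = 0 for all i ≠ 0. Hence (w_0,…,w_N) is a strict system of (N+1) coordinates diagonalizing the system. -/

import Mathlib

/-!
Along a direction `v`, the derivative of `w_k = f_k / D` with `D = 1 - ∑_{l<k} f_l` is
`(D v_k + f_k ∑_{l<k} v_l) / D²`. For `i > k` the eigenvector `r_i` vanishes at all indices
`≤ k`, so the numerator is `0`. For `i < k`, with `T = 1 - ∑_{l≤i} f_l` and `B = ∑_{i<l<k} f_l`,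
one has `D = T - B`, `(r_i)_k = -f_k / T` and `∑_{l<k} (r_i)_l = 1 - B / T`, so the numerator is
`f_k (-(T - B) + T - B) / T = 0`. Positivity of `f` and `ρ < 1` keep `D` and `T` nonzero.
-/

open Finset

theorem fderiv_apply_div_one_sub_sum {ι : Type*} [Fintype ι] (s : Finset ι) (k : ι)
    {f : ι → ℝ} (hD : 1 - ∑ l ∈ s, f l ≠ 0) (v : ι → ℝ) :
    fderiv ℝ (fun g : ι → ℝ => g k / (1 - ∑ l ∈ s, g l)) f v
      = ((1 - ∑ l ∈ s, f l) * v k + f k * ∑ l ∈ s, v l) / (1 - ∑ l ∈ s, f l) ^ 2 := by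
  have hdiff : DifferentiableAt ℝ (fun g : ι → ℝ => g k / (1 - ∑ l ∈ s, g l)) f := by
    fun_prop (disch := exact hD)
  have hline (l : ι) : HasDerivAt (fun t : ℝ => f l + t * v l) (v l) 0 := by
    simpa using ((hasDerivAt_id (0 : ℝ)).mul_const (v l)).const_add (f l)
  have hden : HasDerivAt (fun t : ℝ => 1 - ∑ l ∈ s, (f l + t * v l)) (-∑ l ∈ s, v l) 0 :=
    (HasDerivAt.fun_sum fun l _ => hline l).const_sub 1
  have hquot : HasLineDerivAt ℝ (fun g : ι → ℝ => g k / (1 - ∑ l ∈ s, g l))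
      ((v k * (1 - ∑ l ∈ s, f l) + f k * ∑ l ∈ s, v l) / (1 - ∑ l ∈ s, f l) ^ 2) f v := by
    simpa [HasLineDerivAt] using (hline k).fun_div hden (by simpa using hD)
  rw [← hdiff.lineDeriv_eq_fderiv, hquot.lineDeriv, mul_comm]

section TrafficEigenvector

variable {ι : Type*} [LinearOrder ι] [LocallyFiniteOrderBot ι]

theorem sum_Iio_eq_sum_Iic_add_sum_Ioo [LocallyFiniteOrder ι] {M : Type*} [AddCommMonoid M] {i k : ι} (h : i < k)
    (g : ι → M) : ∑ l ∈ Iio k, g l = ∑ l ∈ Iic i, g l + ∑ l ∈ Ioo i k, g l := by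
  have hunion : Iic i ∪ Ioo i k = Iio k := by
    rw [← coe_inj, coe_union, coe_Iic, coe_Ioo, coe_Iio, Set.Iic_union_Ioo_eq_Iio h]
  have hdisj : Disjoint (Iic i) (Ioo i k) :=
    disjoint_left.2 fun _ hl hl' => (mem_Iic.1 hl).not_gt (mem_Ioo.1 hl').1
  rw [← hunion, sum_union hdisj]

noncomputable def trafficEigenvector (f : ι → ℝ) (i : ι) : ι → ℝ := fun k =>
  if k < i then 0 else if k = i then 1 else -f k / (1 - ∑ l ∈ Iic i, f l)

variable {f : ι → ℝ} {i k : ι}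

theorem trafficEigenvector_of_lt (h : k < i) : trafficEigenvector f i k = 0 := if_pos h

theorem trafficEigenvector_self : trafficEigenvector f i i = 1 := by
  simp [trafficEigenvector]

theorem trafficEigenvector_of_gt (h : i < k) :
    trafficEigenvector f i k = -f k / (1 - ∑ l ∈ Iic i, f l) := by
  simp [trafficEigenvector, h.not_gt, h.ne']

theorem sum_Iio_trafficEigenvector_of_le (h : k ≤ i) : ∑ l ∈ Iio k, trafficEigenvector f i l = 0 :=
  sum_eq_zero fun _ hl => trafficEigenvector_of_lt ((mem_Iio.1 hl).trans_le h)

theorem sum_Iic_trafficEigenvector : ∑ l ∈ Iic i, trafficEigenvector f i l = 1 := by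
  rw [← Iio_insert, sum_insert notMem_Iio_self, sum_Iio_trafficEigenvector_of_le le_rfl,
    trafficEigenvector_self, add_zero]

theorem sum_Iio_trafficEigenvector_of_lt [LocallyFiniteOrder ι] (h : i < k) :
    ∑ l ∈ Iio k, trafficEigenvector f i l
      = 1 - (∑ l ∈ Ioo i k, f l) / (1 - ∑ l ∈ Iic i, f l) := by
  rw [sum_Iio_eq_sum_Iic_add_sum_Ioo h, sum_Iic_trafficEigenvector,
    sum_congr rfl fun l hl => trafficEigenvector_of_gt (mem_Ioo.1 hl).1, ← sum_div,
    sum_neg_distrib, neg_div, ← sub_eq_add_neg]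

theorem fderiv_div_one_sub_sum_Iio_trafficEigenvector [LocallyFiniteOrder ι] [Fintype ι] (hik : i ≠ k)
    (hD : 1 - ∑ l ∈ Iio k, f l ≠ 0) (hT : 1 - ∑ l ∈ Iic i, f l ≠ 0) :
    fderiv ℝ (fun g : ι → ℝ => g k / (1 - ∑ l ∈ Iio k, g l)) f (trafficEigenvector f i) = 0 := by
  rw [fderiv_apply_div_one_sub_sum _ _ hD, div_eq_zero_iff]
  left
  rcases hik.lt_or_gt with hlt | hgt
  · rw [trafficEigenvector_of_gt hlt, sum_Iio_trafficEigenvector_of_lt hlt,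
      sum_Iio_eq_sum_Iic_add_sum_Ioo hlt f]
    field_simp
    ring
  · rw [trafficEigenvector_of_lt hgt, sum_Iio_trafficEigenvector_of_le hgt.le]
    ring

end TrafficEigenvector

theorem stmt6_general (N : ℕ) (f : Fin (N+1) → ℝ)
    (hf : ∀ l, 0 < f l) (hρ : ∑ l, f l < 1)
    (r : Fin (N+1) → Fin (N+1) → ℝ)
    (hr : ∀ i k, r i k = if k < i then 0 else if k = i then 1
      else -f k / (1 - ∑ l ∈ Finset.Iic i, f l)) :
    ∀ k i : Fin (N+1), i ≠ k →
      fderiv ℝ (fun g : Fin (N+1) → ℝ => g k / (1 - ∑ l ∈ Finset.Iio k, g l)) f (r i) = 0 := by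
  intro k i hik
  have hpos (s : Finset (Fin (N+1))) : 0 < 1 - ∑ l ∈ s, f l :=
    sub_pos.2 ((sum_le_univ_sum_of_nonneg fun l => (hf l).le).trans_lt hρ)
  rw [show r i = trafficEigenvector f i from funext (hr i)]
  exact fderiv_div_one_sub_sum_Iio_trafficEigenvector hik (hpos _).ne' (hpos _).ne'

/-- The Riemann invariants `w_0 = f_0`, `w_k = f_k/(1 - Σ_{j<k} f_j)` satisfy
`∇w_k · r_i = 0` for every `i ≠ k` (for `k = 0` the sum below is empty, so `w_0 = f_0`). -/
theorem stmt6 (N : ℕ) (hN : 1 ≤ N) (f : Fin (N+1) → ℝ)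
    (hf : ∀ l, 0 < f l) (hρ : ∑ l, f l < 1)
    (r : Fin (N+1) → Fin (N+1) → ℝ)
    (hr : ∀ i k, r i k = if k < i then 0 else if k = i then 1
      else -f k / (1 - ∑ l ∈ Finset.Iic i, f l)) :
    ∀ k i : Fin (N+1), i ≠ k →
      fderiv ℝ (fun g : Fin (N+1) → ℝ => g k / (1 - ∑ l ∈ Finset.Iio k, g l)) f (r i) = 0 :=
  stmt6_general N f hf hρ r hr
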